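/- arXiv:2601.10100 — 4 statements merged into one kernel-verified Lean document; each statement's English description precedes it below -/
import Mathlib

section
/- Let Σ be a d×d real symmetric positive semidefinite matrix with trace(Σ) = d, and let s ∈ {−1,+1}^d. For any constant c > 0 and λ = c·d, one has sᵀ P diag((μ_i + 2λ)/(μ_i + λ)²) Pᵀ s ≥ d · (2c+1)/(d(c+1)²) · (1/d) · ‖s‖₂² = (2c+1)/(c+1)², where Σ = P diag(μ_1,…,μ_d) Pᵀ is a spectral decomposition. Equivalently, 2λ_L² sᵀ(Σ + λI)⁻¹ s − λ_L² sᵀ(Σ+λI)⁻¹ Σ (Σ+λI)⁻¹ s ≥ λ_L² (2c+1)/(c+1)² for any λ_L > 0. -/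
/-!
Writing `A = Σ + λI`, the left-hand side is `λ_L²` times the quadratic form of
`2A⁻¹ - A⁻¹ΣA⁻¹ = f(Σ)`, where `f(x) = (x + 2λ)/(x + λ)²`. The spectrum of `Σ` lies in
`[0, tr Σ] = [0, d]` and `f` is decreasing there, so `f(Σ) ⪰ f(d) I`; since `‖s‖² = d`, the
quadratic form is at least `d f(d) = (2c+1)/(c+1)²`.
-/

open Matrix
open scoped MatrixOrder

lemma antitoneOn_add_two_mul_div_add_sq {a : ℝ} (ha : 0 < a) :
    AntitoneOn (fun x => (x + 2 * a) / (x + a) ^ 2) (Set.Ici 0) := by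
  intro x hx y hy hxy
  simp only [Set.mem_Ici] at hx hy
  rw [div_le_div_iff₀ (by positivity) (by positivity)]
  nlinarith [mul_nonneg (mul_nonneg hx hy) (sub_nonneg.2 hxy),
    mul_nonneg (add_nonneg hx hy) (sub_nonneg.2 hxy), mul_nonneg ha.le (sub_nonneg.2 hxy)]

lemma dotProduct_self_of_forall_eq_one_or_eq_neg_one {n : ℕ} {s : Fin n → ℝ}
    (hs : ∀ i, s i = 1 ∨ s i = -1) : s ⬝ᵥ s = n := by
  have hsq : ∀ i, s i * s i = 1 := fun i => by rcases hs i with h | h <;> simp [h]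
  simp [dotProduct, hsq]

namespace Matrix

variable {n : Type*} [Fintype n] [DecidableEq n]

lemma mul_dotProduct_self_le_of_smul_one_le {A : Matrix n n ℝ} {r : ℝ} (h : r • 1 ≤ A)
    (x : n → ℝ) : r * (x ⬝ᵥ x) ≤ x ⬝ᵥ A *ᵥ x := by
  have := (le_iff.1 h).dotProduct_mulVec_nonneg x
  rw [star_trivial, sub_mulVec, smul_mulVec, one_mulVec, dotProduct_sub, dotProduct_smul,
    smul_eq_mul] at this
  linarith

lemma PosSemidef.spectrum_subset_Icc_trace {A : Matrix n n ℝ} (hA : A.PosSemidef) :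
    spectrum ℝ A ⊆ Set.Icc 0 A.trace := by
  rw [hA.isHermitian.spectrum_real_eq_range_eigenvalues]
  rintro _ ⟨i, rfl⟩
  refine ⟨hA.eigenvalues_nonneg i, ?_⟩
  rw [hA.isHermitian.trace_eq_sum_eigenvalues, RCLike.ofReal_real_eq_id]
  exact Finset.single_le_sum (fun j _ => hA.eigenvalues_nonneg j) (Finset.mem_univ i)

lemma PosSemidef.inv_add_smul_one_eq_cfc {S : Matrix n n ℝ} (hS : S.PosSemidef) {l : ℝ}
    (hl : 0 < l) : (S + l • 1)⁻¹ = cfc (fun x => (x + l)⁻¹) S := by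
  have hspec := hS.spectrum_subset_Icc_trace
  have := cfc_inv (fun x => x + l) S (fun x hx => by linarith [(hspec hx).1])
    (S.finite_real_spectrum.continuousOn _) hS.isHermitian
  rw [this, cfc_add .., cfc_id' .., cfc_const .., Algebra.algebraMap_eq_smul_one,
    nonsing_inv_eq_ringInverse]

lemma PosSemidef.two_smul_inv_sub_inv_mul_mul_inv_eq_cfc {S : Matrix n n ℝ}
    (hS : S.PosSemidef) {l : ℝ} (hl : 0 < l) :
    (2 : ℝ) • (S + l • 1)⁻¹ - (S + l • 1)⁻¹ * S * (S + l • 1)⁻¹ =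
      cfc (fun x => (x + 2 * l) / (x + l) ^ 2) S := by
  have hspec := hS.spectrum_subset_Icc_trace
  have hc := fun f : ℝ → ℝ => S.finite_real_spectrum.continuousOn f
  rw [hS.inv_add_smul_one_eq_cfc hl]
  calc _ = cfc (fun x => (2 : ℝ) • (x + l)⁻¹ - (x + l)⁻¹ * x * (x + l)⁻¹) S := by
        rw [cfc_sub _ _ _ (hc _) (hc _), cfc_smul _ _ _ (hc _), cfc_mul _ _ _ (hc _) (hc _),
          cfc_mul _ _ _ (hc _) (hc _), cfc_id' ℝ S]
    _ = _ := cfc_congr fun x hx => by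
        have : x + l ≠ 0 := by linarith [(hspec hx).1]
        rw [smul_eq_mul]
        field_simp
        ring

lemma PosSemidef.smul_one_le_two_smul_inv_sub_inv_mul_mul_inv {S : Matrix n n ℝ}
    (hS : S.PosSemidef) {l : ℝ} (hl : 0 < l) :
    ((S.trace + 2 * l) / (S.trace + l) ^ 2) • (1 : Matrix n n ℝ) ≤
      (2 : ℝ) • (S + l • 1)⁻¹ - (S + l • 1)⁻¹ * S * (S + l • 1)⁻¹ := by
  have hspec := hS.spectrum_subset_Icc_trace
  rw [hS.two_smul_inv_sub_inv_mul_mul_inv_eq_cfc hl, ← Algebra.algebraMap_eq_smul_one]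
  refine algebraMap_le_cfc _ _ _ (fun x hx => ?_) (S.finite_real_spectrum.continuousOn _)
    hS.isHermitian
  exact antitoneOn_add_two_mul_div_add_sq hl (hspec hx).1 hS.trace_nonneg (hspec hx).2

end Matrix

theorem stmt2_general (d : ℕ) (hd : 0 < d) (S : Matrix (Fin d) (Fin d) ℝ)
    (hS : S.PosSemidef) (htr : S.trace = (d : ℝ))
    (s : Fin d → ℝ) (hs : ∀ i, s i = 1 ∨ s i = -1)
    (c lamL : ℝ) (hc : 0 < c) :
    lamL ^ 2 * ((2 * c + 1) / (c + 1) ^ 2) ≤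
      2 * lamL ^ 2 * (s ⬝ᵥ ((S + (c * d) • (1 : Matrix (Fin d) (Fin d) ℝ))⁻¹).mulVec s)
        - lamL ^ 2 *
          (s ⬝ᵥ (((S + (c * d) • (1 : Matrix (Fin d) (Fin d) ℝ))⁻¹ * S *
              (S + (c * d) • (1 : Matrix (Fin d) (Fin d) ℝ))⁻¹).mulVec s)) := by
  have hd' : (0 : ℝ) < d := Nat.cast_pos.mpr hd
  set B := (S + (c * d) • (1 : Matrix (Fin d) (Fin d) ℝ))⁻¹
  have key := mul_dotProduct_self_le_of_smul_one_le
    (hS.smul_one_le_two_smul_inv_sub_inv_mul_mul_inv (mul_pos hc hd')) s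
  have hconst :
      ((d + 2 * (c * d)) / (d + c * d) ^ 2) * (s ⬝ᵥ s) = (2 * c + 1) / (c + 1) ^ 2 := by
    rw [dotProduct_self_of_forall_eq_one_or_eq_neg_one hs]
    field_simp
    ring
  have hform : s ⬝ᵥ ((2 : ℝ) • B - B * S * B) *ᵥ s =
      2 * (s ⬝ᵥ B *ᵥ s) - s ⬝ᵥ (B * S * B) *ᵥ s := by
    rw [sub_mulVec, smul_mulVec, dotProduct_sub, dotProduct_smul, smul_eq_mul]
  rw [htr, hconst, hform] at key
  linarith [mul_le_mul_of_nonneg_left key (sq_nonneg lamL)]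

/-- For a symmetric PSD `Σ` with `trace Σ = d`, a `±1` sign vector `s`, `c > 0`,
`λ = c·d` and any `λ_L > 0`,
`2 λ_L² sᵀ(Σ + λI)⁻¹ s − λ_L² sᵀ(Σ+λI)⁻¹ Σ (Σ+λI)⁻¹ s ≥ λ_L² (2c+1)/(c+1)²`. -/
theorem stmt2 (d : ℕ) (hd : 0 < d) (S : Matrix (Fin d) (Fin d) ℝ)
    (hS : S.PosSemidef) (htr : S.trace = (d : ℝ))
    (s : Fin d → ℝ) (hs : ∀ i, s i = 1 ∨ s i = -1)
    (c lamL : ℝ) (hc : 0 < c) (hl : 0 < lamL) :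
    lamL ^ 2 * ((2 * c + 1) / (c + 1) ^ 2) ≤
      2 * lamL ^ 2 * (s ⬝ᵥ ((S + (c * d) • (1 : Matrix (Fin d) (Fin d) ℝ))⁻¹).mulVec s)
        - lamL ^ 2 *
          (s ⬝ᵥ (((S + (c * d) • (1 : Matrix (Fin d) (Fin d) ℝ))⁻¹ * S *
              (S + (c * d) • (1 : Matrix (Fin d) (Fin d) ℝ))⁻¹).mulVec s)) :=
  stmt2_general d hd S hS htr s hs c lamL hc
end

section
/- In the linear model y = Xβ₀ + ε with X ∈ ℝ^{n×p}, suppose β̂_L is a Lasso solution supported on E with β̂_{L,E} = (X_EᵀX_E)⁻¹(X_Eᵀy − nλ_L s), where X_E has full column rank and s ∈ ℝ^{|E|}. Let δ̂ ∈ ℝᵖ be any vector supported on E. Then the prediction error gap Δ = (1/n)(‖X(β̂_L − β₀)‖₂² − ‖X(β̂_L + δ̂ − β₀)‖₂²) satisfies the exact identity Δ = 2λ_L⟨δ̂_E, s⟩ − (1/n)‖X_E δ̂_E‖₂² − (2/n)⟨X_E δ̂_E, ε⟩. -/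
open Matrix

/-- Exact identity for the prediction error gap of the Lasso–Ridge refinement:
in the model `y = Xβ₀ + ε`, if the Lasso solution `β̂` is supported on `E` with
`β̂_E = (X_Eᵀ X_E)⁻¹(X_Eᵀ y − n λ_L s)` and `δ̂` is any vector supported on `E`, then
`Δ = (1/n)(‖X(β̂ − β₀)‖² − ‖X(β̂ + δ̂ − β₀)‖²)
   = 2 λ_L ⟨δ̂_E, s⟩ − (1/n)‖X_E δ̂_E‖² − (2/n)⟨X_E δ̂_E, ε⟩`. -/
theorem stmt12 (n p : ℕ) (hn : 0 < n)
    (X : Matrix (Fin n) (Fin p) ℝ) (β0 : Fin p → ℝ) (eps : Fin n → ℝ)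
    (y : Fin n → ℝ) (hy : y = X.mulVec β0 + eps)
    (lamL : ℝ) (E : Finset (Fin p))
    (Xe : Matrix (Fin n) {i // i ∈ E} ℝ) (hXe : ∀ k j, Xe k j = X k (j : Fin p))
    (hG : IsUnit (Xeᵀ * Xe).det)
    (s : {i // i ∈ E} → ℝ)
    (βh : Fin p → ℝ) (hβsupp : ∀ i, βh i ≠ 0 → i ∈ E)
    (hβform : (fun j : {i // i ∈ E} => βh (j : Fin p)) =
      ((Xeᵀ * Xe)⁻¹).mulVec (Xeᵀ.mulVec y - ((n : ℝ) * lamL) • s))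
    (δh : Fin p → ℝ) (hδsupp : ∀ i, δh i ≠ 0 → i ∈ E) :
    (1 / (n : ℝ)) * ((∑ k, (X.mulVec (βh - β0) k) ^ 2)
        - ∑ k, (X.mulVec (βh + δh - β0) k) ^ 2)
      = 2 * lamL * ((fun j : {i // i ∈ E} => δh (j : Fin p)) ⬝ᵥ s)
        - (1 / (n : ℝ)) * ∑ k, (Xe.mulVec (fun j => δh (j : Fin p)) k) ^ 2
        - (2 / (n : ℝ)) * ((Xe.mulVec (fun j => δh (j : Fin p))) ⬝ᵥ eps) := by
  classical
  set βE : {i // i ∈ E} → ℝ := fun j => βh (j : Fin p) with hβE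
  set δE : {i // i ∈ E} → ℝ := fun j => δh (j : Fin p) with hδE
  -- mulVec of supported vectors restricts to Xe
  have key : ∀ (w : Fin p → ℝ), (∀ i, w i ≠ 0 → i ∈ E) →
      X.mulVec w = Xe.mulVec (fun j : {i // i ∈ E} => w (j : Fin p)) := by
    intro w hw
    funext k
    simp only [Matrix.mulVec, dotProduct]
    have h1 : ∑ i : Fin p, X k i * w i = ∑ i ∈ E, X k i * w i := by
      refine (Finset.sum_subset (Finset.subset_univ E) ?_).symm
      intro i _ hi
      have : w i = 0 := by
        by_contra h
        exact hi (hw i h)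
      simp [this]
    simp only [hXe]
    rw [h1]
    exact Finset.sum_subtype E (fun i => Iff.rfl) (fun i => X k i * w i)
  have hXβ : X.mulVec βh = Xe.mulVec βE := key βh hβsupp
  have hXδ : X.mulVec δh = Xe.mulVec δE := key δh hδsupp
  set v : Fin n → ℝ := Xe.mulVec δE with hv
  -- the normal-equation identity
  have hGβ : (Xeᵀ * Xe).mulVec βE = Xeᵀ.mulVec y - ((n : ℝ) * lamL) • s := by
    rw [hβform, Matrix.mulVec_mulVec, Matrix.mul_nonsing_inv _ hG, Matrix.one_mulVec]
  -- transpose trick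
  have htr : ∀ (u : Fin n → ℝ), u ⬝ᵥ v = (Xeᵀ.mulVec u) ⬝ᵥ δE := by
    intro u
    rw [hv, Matrix.dotProduct_mulVec, Matrix.mulVec_transpose]
  -- key inner product
  have hB : (X.mulVec (βh - β0)) ⬝ᵥ v
      = -(((n : ℝ) * lamL) * (s ⬝ᵥ δE)) + eps ⬝ᵥ v := by
    have hXβ0 : X.mulVec β0 = y - eps := by rw [hy]; abel
    rw [Matrix.mulVec_sub, hXβ, hXβ0, sub_dotProduct, sub_dotProduct,
      htr (Xe.mulVec βE), Matrix.mulVec_mulVec, hGβ, htr y, sub_dotProduct,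
      smul_dotProduct, smul_eq_mul]
    ring
  -- rewrite sums of squares as dot products
  have hsq : ∀ (f : Fin n → ℝ), ∑ k, (f k) ^ 2 = f ⬝ᵥ f := by
    intro f; simp [dotProduct, sq]
  have hsplit : X.mulVec (βh + δh - β0) = X.mulVec (βh - β0) + v := by
    rw [← hXδ, ← Matrix.mulVec_add]
    exact congrArg _ (by abel)
  rw [hsq, hsq, hsq, hsplit]
  set a : Fin n → ℝ := X.mulVec (βh - β0) with ha
  have hexp : (a + v) ⬝ᵥ (a + v) = a ⬝ᵥ a + 2 * (a ⬝ᵥ v) + v ⬝ᵥ v := by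
    rw [add_dotProduct, dotProduct_add, dotProduct_add,
      dotProduct_comm v a]
    ring
  have hve : v ⬝ᵥ eps = eps ⬝ᵥ v := dotProduct_comm _ _
  have hδs : δE ⬝ᵥ s = s ⬝ᵥ δE := dotProduct_comm _ _
  rw [hexp, hB, hve, hδs]
  have hn' : (n : ℝ) ≠ 0 := Nat.cast_ne_zero.mpr hn.ne'
  field_simp
  ring
end

section
/- Let X = [X₁,…,X_p] ∈ ℝ^{n×p} and suppose {1,…,p} is partitioned into K clusters with representative vectors v₁,…,v_K ∈ ℝⁿ satisfying ‖v_ℓ‖₂ ≤ √n, such that ‖X_j − v_{r(j)}‖₂ ≤ δ√n for all j, where r(j) is the cluster of j and δ ∈ (0,1]. If ε ∼ N(0, σ² I_n), then (1/n)E‖Xᵀε‖_∞ ≤ (σ/√n)(√(2log(2K)) + δ√(2log(2p))). -/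
/-!
Write each column as `X_j = v_{r(j)} + (X_j - v_{r(j)})`. Then `|X_jᵀε|` is at most the maximum
of the `K` Gaussians `v_ℓᵀε`, of variance at most `σ²n`, plus the maximum of the `p` Gaussians
`(X_j - v_{r(j)})ᵀε`, of variance at most `σ²δ²n`. Each maximum is controlled by the
sub-Gaussian maximal inequality `E max_{i ≤ m} |Z_i| ≤ √(2c log(2m))`, which follows from Jensen's
inequality, the bound `exp (t max_i |Z_i|) ≤ ∑_i (exp (t Z_i) + exp (-t Z_i))`, and optimizing
over `t > 0`.
-/

open MeasureTheory ProbabilityTheory Real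
open scoped NNReal

lemma iSup_abs_le_iSup_abs_add_iSup_abs {ι κ : Type*} [Finite ι] [Finite κ] (f h : ι → ℝ)
    (g : κ → ℝ) (r : ι → κ) (hf : ∀ i, f i = g (r i) + h i) :
    ⨆ i, |f i| ≤ (⨆ l, |g l|) + ⨆ i, |h i| := by
  have hg : ∀ l, |g l| ≤ ⨆ l, |g l| := le_ciSup (Set.finite_range _).bddAbove
  have hh : ∀ i, |h i| ≤ ⨆ i, |h i| := le_ciSup (Set.finite_range _).bddAbove
  refine Real.iSup_le (fun i => ?_) ?_
  · rw [hf i]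
    exact (abs_add_le _ _).trans (add_le_add (hg (r i)) (hh i))
  · exact add_nonneg (Real.iSup_nonneg fun _ => abs_nonneg _)
      (Real.iSup_nonneg fun _ => abs_nonneg _)

lemma exp_mul_iSup_abs_le_sum {ι : Type*} [Fintype ι] [Nonempty ι] (x : ι → ℝ) {t : ℝ}
    (ht : 0 ≤ t) :
    exp (t * ⨆ i, |x i|) ≤ ∑ i, (exp (t * x i) + exp (-t * x i)) := by
  obtain ⟨i, hi⟩ := exists_eq_ciSup_of_finite (f := fun i => |x i|)
  calc exp (t * ⨆ i, |x i|) = exp |t * x i| := by rw [← hi, abs_mul, abs_of_nonneg ht]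
    _ ≤ exp (t * x i) + exp (-t * x i) := by simpa only [neg_mul] using exp_abs_le (t * x i)
    _ ≤ ∑ i, (exp (t * x i) + exp (-t * x i)) :=
      Finset.single_le_sum (f := fun i => exp (t * x i) + exp (-t * x i))
        (fun _ _ => by positivity) (Finset.mem_univ i)

lemma le_sqrt_of_forall_mul_le {x L c : ℝ} (hL : 0 < L) (hc : 0 ≤ c)
    (h : ∀ t > 0, t * x ≤ L + c * t ^ 2 / 2) : x ≤ √(2 * c * L) := by
  set s := √(2 * c * L)
  have hs2 : s ^ 2 = 2 * c * L := sq_sqrt (by positivity)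
  refine le_of_forall_pos_le_add fun ε hε => ?_
  -- `t = 2L / s` would be optimal; `ε` keeps `t` finite when `s = 0`.
  set t := 2 * L / (s + ε)
  have ht : 0 < t := by positivity
  have hts : t * (s + ε) = 2 * L := div_mul_cancel₀ _ (by positivity)
  have hct : c * t ^ 2 ≤ 2 * L := by
    refine le_of_mul_le_mul_right ?_ (by positivity : 0 < (s + ε) ^ 2)
    calc c * t ^ 2 * (s + ε) ^ 2 = 2 * L * s ^ 2 := by
          rw [show c * t ^ 2 * (s + ε) ^ 2 = c * (t * (s + ε)) ^ 2 by ring, hts, hs2]; ring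
      _ ≤ 2 * L * (s + ε) ^ 2 := by gcongr; linarith [sqrt_nonneg (2 * c * L)]
  refine le_of_mul_le_mul_left ?_ ht
  linarith [h t ht]

lemma sqrt_two_mul_sq_mul_mul {a x : ℝ} (ha : 0 ≤ a) (hx : 0 ≤ x) (L : ℝ) :
    √(2 * (a ^ 2 * x) * L) = a * √x * √(2 * L) := by
  rw [show 2 * (a ^ 2 * x) * L = a ^ 2 * x * (2 * L) by ring, sqrt_mul (by positivity),
    sqrt_mul (sq_nonneg a), sqrt_sq ha]

namespace ProbabilityTheory

variable {Ω : Type*} {mΩ : MeasurableSpace Ω} {μ : Measure Ω}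

lemma HasSubgaussianMGF.mono {X : Ω → ℝ} {c c' : ℝ≥0} (h : HasSubgaussianMGF X c μ)
    (hc : c ≤ c') : HasSubgaussianMGF X c' μ :=
  ⟨h.integrable_exp_mul, fun t => (h.mgf_le t).trans (exp_le_exp.2 (by gcongr))⟩

lemma HasLaw.hasSubgaussianMGF_of_gaussianReal {X : Ω → ℝ} {v : ℝ≥0}
    (hX : HasLaw X (gaussianReal 0 v) μ) : HasSubgaussianMGF X v μ := by
  rw [← HasSubgaussianMGF.id_map_iff hX.aemeasurable, hX.map_eq]
  exact ⟨integrable_exp_mul_gaussianReal, fun t => by simp [mgf_id_gaussianReal]⟩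

lemma hasSubgaussianMGF_sum_mul_pi_gaussianReal {ι : Type*} [Fintype ι] (v : ℝ≥0) (a : ι → ℝ)
    {c : ℝ≥0} (hc : v * ∑ k, a k ^ 2 ≤ c) :
    HasSubgaussianMGF (fun e : ι → ℝ => ∑ k, a k * e k) c
      (Measure.pi fun _ => gaussianReal 0 v) := by
  have hcoord (k : ι) : HasSubgaussianMGF (fun e : ι → ℝ => a k * e k)
      (⟨a k ^ 2, sq_nonneg _⟩ * v) (Measure.pi fun _ => gaussianReal 0 v) := by
    have := gaussianReal_const_mul
      (measurePreserving_eval (fun _ => gaussianReal 0 v) k).hasLaw (a k)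
    rw [mul_zero] at this
    exact this.hasSubgaussianMGF_of_gaussianReal
  have hindep : iIndepFun (fun k (e : ι → ℝ) => a k * e k)
      (Measure.pi fun _ => gaussianReal 0 v) :=
    iIndepFun_pi (X := fun k x => a k * x) fun _ => by fun_prop
  refine (HasSubgaussianMGF.sum_of_iIndepFun hindep fun k _ => hcoord k).mono ?_
  rw [← NNReal.coe_le_coe]
  convert hc using 1
  push_cast
  rw [Finset.mul_sum]
  exact Finset.sum_congr rfl fun k _ => mul_comm _ _

variable {ι : Type*} [Fintype ι] {Z : ι → Ω → ℝ} {c : ℝ≥0}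

lemma integrable_iSup_abs_of_hasSubgaussianMGF (h : ∀ i, HasSubgaussianMGF (Z i) c μ) :
    Integrable (fun ω => ⨆ i, |Z i ω|) μ := by
  refine Integrable.mono' (integrable_finsetSum Finset.univ fun i _ => (h i).integrable.abs)
    (AEMeasurable.iSup fun i => (h i).aemeasurable.abs).aestronglyMeasurable
    (ae_of_all _ fun ω => ?_)
  rw [Real.norm_eq_abs, abs_of_nonneg (Real.iSup_nonneg fun _ => abs_nonneg _)]
  exact Real.iSup_le (fun i => Finset.single_le_sum (f := fun i => |Z i ω|)
    (fun _ _ => abs_nonneg _) (Finset.mem_univ i)) (Finset.sum_nonneg fun _ _ => abs_nonneg _)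

lemma integral_exp_mul_iSup_abs_le [Nonempty ι] (h : ∀ i, HasSubgaussianMGF (Z i) c μ) {t : ℝ}
    (ht : 0 ≤ t) :
    Integrable (fun ω => exp (t * ⨆ i, |Z i ω|)) μ ∧
      ∫ ω, exp (t * ⨆ i, |Z i ω|) ∂μ ≤ 2 * Fintype.card ι * exp (c * t ^ 2 / 2) := by
  have hpair (i : ι) : Integrable (fun ω => exp (t * Z i ω) + exp (-t * Z i ω)) μ :=
    ((h i).integrable_exp_mul t).add ((h i).integrable_exp_mul (-t))
  have hsum : Integrable (fun ω => ∑ i, (exp (t * Z i ω) + exp (-t * Z i ω))) μ :=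
    integrable_finsetSum Finset.univ fun i _ => hpair i
  have hle (ω : Ω) : exp (t * ⨆ i, |Z i ω|) ≤ ∑ i, (exp (t * Z i ω) + exp (-t * Z i ω)) :=
    exp_mul_iSup_abs_le_sum (fun i => Z i ω) ht
  have hexp : Integrable (fun ω => exp (t * ⨆ i, |Z i ω|)) μ := by
    refine hsum.mono' ?_ (ae_of_all _ fun ω => ?_)
    · exact ((AEMeasurable.iSup fun i => (h i).aemeasurable.abs).const_mul t).exp
        |>.aestronglyMeasurable
    · rw [Real.norm_eq_abs, abs_of_pos (exp_pos _)]
      exact hle ω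
  refine ⟨hexp, ?_⟩
  calc ∫ ω, exp (t * ⨆ i, |Z i ω|) ∂μ
      ≤ ∫ ω, ∑ i, (exp (t * Z i ω) + exp (-t * Z i ω)) ∂μ := integral_mono hexp hsum hle
    _ = ∑ i, (mgf (Z i) μ t + mgf (Z i) μ (-t)) := by
      rw [integral_finsetSum Finset.univ fun i _ => hpair i]
      exact Finset.sum_congr rfl fun i _ =>
        integral_add ((h i).integrable_exp_mul t) ((h i).integrable_exp_mul (-t))
    _ ≤ ∑ _i : ι, (exp (c * t ^ 2 / 2) + exp (c * t ^ 2 / 2)) := by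
      gcongr with i
      · exact (h i).mgf_le t
      · simpa using (h i).mgf_le (-t)
    _ = 2 * Fintype.card ι * exp (c * t ^ 2 / 2) := by
      rw [Finset.sum_const, Finset.card_univ, nsmul_eq_mul]
      ring

theorem integral_iSup_abs_le_of_hasSubgaussianMGF [IsProbabilityMeasure μ]
    (h : ∀ i, HasSubgaussianMGF (Z i) c μ) :
    ∫ ω, ⨆ i, |Z i ω| ∂μ ≤ √(2 * c * log (2 * Fintype.card ι)) := by
  cases isEmpty_or_nonempty ι
  · simp
  have hlog : 0 < log (2 * Fintype.card ι) :=
    log_pos (by have := Fintype.card_pos (α := ι); norm_cast; omega)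
  refine le_sqrt_of_forall_mul_le hlog c.2 fun t ht => ?_
  obtain ⟨hint, hle⟩ := integral_exp_mul_iSup_abs_le h ht.le
  have hjensen : exp (t * ∫ ω, ⨆ i, |Z i ω| ∂μ) ≤ ∫ ω, exp (t * ⨆ i, |Z i ω|) ∂μ := by
    rw [← integral_const_mul]
    exact convexOn_exp.map_integral_le continuous_exp.continuousOn isClosed_univ
      (ae_of_all _ fun _ => Set.mem_univ _)
      ((integrable_iSup_abs_of_hasSubgaussianMGF h).const_mul t) hint
  rw [← exp_le_exp, exp_add, exp_log (by positivity)]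
  exact hjensen.trans hle

end ProbabilityTheory

theorem stmt15_general (n p K : ℕ)
    (X : Matrix (Fin n) (Fin p) ℝ) (r : Fin p → Fin K) (v : Fin K → Fin n → ℝ)
    (hv : ∀ l, ∑ k, (v l k) ^ 2 ≤ (n : ℝ))
    (δ : ℝ) (hδ : 0 < δ)
    (hcl : ∀ j, ∑ k, (X k j - v (r j) k) ^ 2 ≤ δ ^ 2 * n)
    (σ : ℝ) (hσ : 0 ≤ σ) :
    (1 / (n : ℝ)) * (∫ e : Fin n → ℝ, (⨆ j : Fin p, |∑ k, X k j * e k|)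
        ∂(Measure.pi fun _ : Fin n => gaussianReal 0 ⟨σ ^ 2, sq_nonneg σ⟩))
      ≤ (σ / Real.sqrt n) *
          (Real.sqrt (2 * Real.log (2 * K)) + δ * Real.sqrt (2 * Real.log (2 * p))) := by
  set V : ℝ≥0 := ⟨σ ^ 2, sq_nonneg σ⟩
  set μ := Measure.pi fun _ : Fin n => gaussianReal 0 V
  set center : Fin K → (Fin n → ℝ) → ℝ := fun l e => ∑ k, v l k * e k
  set offset : Fin p → (Fin n → ℝ) → ℝ := fun j e => ∑ k, (X k j - v (r j) k) * e k
  have hcenter (l : Fin K) : HasSubgaussianMGF (center l) (⟨σ ^ 2 * n, by positivity⟩ : ℝ≥0) μ :=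
    hasSubgaussianMGF_sum_mul_pi_gaussianReal _ _ (by
      show σ ^ 2 * _ ≤ σ ^ 2 * (n : ℝ)
      gcongr
      exact hv l)
  have hoffset (j : Fin p) :
      HasSubgaussianMGF (offset j) (⟨(σ * δ) ^ 2 * n, by positivity⟩ : ℝ≥0) μ :=
    hasSubgaussianMGF_sum_mul_pi_gaussianReal _ _ (by
      show σ ^ 2 * _ ≤ (σ * δ) ^ 2 * (n : ℝ)
      rw [mul_pow, mul_assoc]
      gcongr
      exact hcl j)
  have hsplit (e : Fin n → ℝ) :
      ⨆ j, |∑ k, X k j * e k| ≤ (⨆ l, |center l e|) + ⨆ j, |offset j e| :=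
    iSup_abs_le_iSup_abs_add_iSup_abs _ _ _ r fun j => by
      simp only [center, offset, ← Finset.sum_add_distrib, ← add_mul, add_sub_cancel]
  have hA := integrable_iSup_abs_of_hasSubgaussianMGF hcenter
  have hB := integrable_iSup_abs_of_hasSubgaussianMGF hoffset
  calc (1 / (n : ℝ)) * ∫ e, ⨆ j, |∑ k, X k j * e k| ∂μ
      ≤ (1 / n) * ((∫ e, ⨆ l, |center l e| ∂μ) + ∫ e, ⨆ j, |offset j e| ∂μ) := by
        rw [← integral_add hA hB]
        refine mul_le_mul_of_nonneg_left ?_ (by positivity)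
        exact integral_mono_of_nonneg
          (ae_of_all _ fun e => Real.iSup_nonneg fun _ => abs_nonneg _) (hA.add hB)
          (ae_of_all _ hsplit)
    _ ≤ (1 / n) * (√(2 * (σ ^ 2 * n) * log (2 * K)) + √(2 * ((σ * δ) ^ 2 * n) * log (2 * p))) := by
        gcongr
        · exact (integral_iSup_abs_le_of_hasSubgaussianMGF hcenter).trans_eq
            (by rw [Fintype.card_fin]; rfl)
        · exact (integral_iSup_abs_le_of_hasSubgaussianMGF hoffset).trans_eq
            (by rw [Fintype.card_fin]; rfl)
    _ = (σ / √n) * (√(2 * log (2 * K)) + δ * √(2 * log (2 * p))) := by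
        rw [sqrt_two_mul_sq_mul_mul hσ n.cast_nonneg,
          sqrt_two_mul_sq_mul_mul (by positivity) n.cast_nonneg,
          div_eq_mul_one_div σ, ← sqrt_div_self']
        ring

/-- Two-step bound under clustering: if the columns of `X` are partitioned into `K`
clusters with representatives `v_ℓ` of norm at most `√n` and cluster radius `δ√n`,
and `ε ∼ N(0, σ² Iₙ)`, then
`(1/n) E‖Xᵀε‖_∞ ≤ (σ/√n)(√(2 log(2K)) + δ √(2 log(2p)))`. -/
theorem stmt15 (n p K : ℕ) (hn : 0 < n) (hp : 0 < p) (hK : 0 < K)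
    (X : Matrix (Fin n) (Fin p) ℝ) (r : Fin p → Fin K) (v : Fin K → Fin n → ℝ)
    (hv : ∀ l, ∑ k, (v l k) ^ 2 ≤ (n : ℝ))
    (δ : ℝ) (hδ : 0 < δ) (hδ1 : δ ≤ 1)
    (hcl : ∀ j, ∑ k, (X k j - v (r j) k) ^ 2 ≤ δ ^ 2 * n)
    (σ : ℝ) (hσ : 0 ≤ σ) :
    (1 / (n : ℝ)) * (∫ e : Fin n → ℝ, (⨆ j : Fin p, |∑ k, X k j * e k|)
        ∂(Measure.pi fun _ : Fin n => gaussianReal 0 ⟨σ ^ 2, sq_nonneg σ⟩))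
      ≤ (σ / Real.sqrt n) *
          (Real.sqrt (2 * Real.log (2 * K)) + δ * Real.sqrt (2 * Real.log (2 * p))) :=
  stmt15_general n p K X r v hv δ hδ hcl σ hσ
end

section
/- Let y = Xβ₀ + ε with ε ∼ N(0, σ²I_n), X ∈ ℝ^{n×p} deterministic, and Σ_n = XᵀX/n with column normalization ‖X_j‖₂² = n. Let β̂_L be a Lasso solution with parameter λ_L > 0 and let E be its equicorrelation set. Then P(E = ∅) ≤ Φ((λ_L − ‖Σ_n β₀‖_∞)/(σ/√n)), where Φ is the standard normal CDF. -/
open Matrix MeasureTheory ProbabilityTheory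

open Filter Topology
open scoped NNReal

/-!
Write `g = Xᵀ(y − Xβ̂)`. Minimality of the Lasso objective along the directions `d` and `−β̂`
gives the KKT conditions `|g_j| ≤ nλ` and `nλ‖β̂‖₁ ≤ ⟪β̂, g⟫`. If the equicorrelation set is
empty, all the first inequalities are strict and the second forces `β̂ = 0`, so that
`|(Xᵀy)_j| ≤ nλ` for every `j`. Choosing `j` with `|(Σₙβ₀)_j| = ‖Σₙβ₀‖_∞` and the sign `s` of
`(XᵀXβ₀)_j`, this gives `s X_jᵀε ≤ nλ − n‖Σₙβ₀‖_∞`, and `s X_jᵀε ∼ N(0, nσ²)` since `‖X_j‖² = n`.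
-/

theorem map_sum_mul_pi_gaussianReal {ι : Type*} [Fintype ι] (μ : ι → ℝ) (v : ι → ℝ≥0)
    (c : ι → ℝ) :
    (Measure.pi fun i => gaussianReal (μ i) (v i)).map (fun e => ∑ i, c i * e i)
      = gaussianReal (∑ i, c i * μ i) (∑ i, (c i ^ 2).toNNReal * v i) := by
  have hscale : (Measure.pi fun i => gaussianReal (μ i) (v i)).map (fun e i => c i * e i)
      = Measure.pi fun i => gaussianReal (c i * μ i) ((c i ^ 2).toNNReal * v i) := by
    rw [Measure.pi_map_pi fun i => by fun_prop]
    simp_rw [gaussianReal_map_const_mul, Real.toNNReal_of_nonneg (sq_nonneg _)]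
  rw [show (fun e : ι → ℝ => ∑ i, c i * e i)
      = (fun e => ∑ i, e i) ∘ (fun e i => c i * e i) from rfl,
    ← Measure.map_map (by fun_prop) (by fun_prop), hscale]
  refine Measure.ext_of_charFun (funext fun t => ?_)
  simp only [charFun_map_sum_pi_eq_prod, Finset.prod_apply, charFun_gaussianReal,
    ← Complex.exp_sum]
  congr 1
  push_cast
  rw [Finset.mul_sum, Finset.sum_mul, Finset.sum_mul, Finset.sum_div, ← Finset.sum_sub_distrib]

theorem gaussianReal_Iic_eq (μ : ℝ) {v : ℝ≥0} (hv : v ≠ 0) (t : ℝ) :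
    gaussianReal μ v (Set.Iic t) = gaussianReal 0 1 (Set.Iic ((t - μ) / √v)) := by
  have hs : 0 < √(v : ℝ) := Real.sqrt_pos.2 (by positivity)
  have hstd : (gaussianReal 0 1).map (fun x => √(v : ℝ) * x + μ) = gaussianReal μ v := by
    rw [show (fun x => √(v : ℝ) * x + μ) = (· + μ) ∘ (√(v : ℝ) * ·) from rfl,
      ← Measure.map_map (by fun_prop) (by fun_prop),
      gaussianReal_map_const_mul, gaussianReal_map_add_const]
    congr 1
    · simp
    · ext; simp [Real.sq_sqrt v.coe_nonneg]
  rw [← hstd, Measure.map_apply (by fun_prop) measurableSet_Iic]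
  congr 1
  ext x
  simp only [Set.mem_preimage, Set.mem_Iic]
  rw [le_div_iff₀ hs]
  constructor <;> intro h <;> linarith

theorem measure_pi_gaussianReal_sum_mul_le {ι : Type*} [Fintype ι] {v : ℝ≥0} (hv : v ≠ 0)
    {c : ι → ℝ} (hc : 0 < ∑ i, c i ^ 2) (t : ℝ) :
    (Measure.pi fun _ : ι => gaussianReal 0 v) {e | ∑ i, c i * e i ≤ t}
      = gaussianReal 0 1 (Set.Iic (t / √(v * ∑ i, c i ^ 2))) := by
  have hvar : ((∑ i, (c i ^ 2).toNNReal * v : ℝ≥0) : ℝ) = v * ∑ i, c i ^ 2 := by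
    push_cast
    simp_rw [Real.coe_toNNReal _ (sq_nonneg _), Finset.mul_sum, mul_comm]
  have hv' : (∑ i, (c i ^ 2).toNNReal * v) ≠ 0 := by
    rw [← NNReal.coe_ne_zero, hvar]; positivity
  rw [show {e : ι → ℝ | ∑ i, c i * e i ≤ t} = (fun e => ∑ i, c i * e i) ⁻¹' Set.Iic t from rfl,
    ← Measure.map_apply (by fun_prop) measurableSet_Iic, map_sum_mul_pi_gaussianReal,
    gaussianReal_Iic_eq _ hv', hvar]
  simp

theorem exists_abs_eq_one_mul_eq_abs (a : ℝ) : ∃ s : ℝ, |s| = 1 ∧ s * a = |a| := by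
  rcases le_or_gt 0 a with ha | ha
  · exact ⟨1, by simp, by simp [abs_of_nonneg ha]⟩
  · exact ⟨-1, by simp, by simp [abs_of_neg ha]⟩

theorem nonpos_of_eventually_mul_le_mul_sq {a b : ℝ}
    (h : ∀ᶠ s in 𝓝[>] 0, a * s ≤ b * s ^ 2) : a ≤ 0 := by
  have hlim : Tendsto (fun s => b * s) (𝓝[>] 0) (𝓝 0) := by
    simpa using ((continuous_const_mul b).tendsto 0).mono_left nhdsWithin_le_nhds
  refine ge_of_tendsto hlim ((h.and self_mem_nhdsWithin).mono fun s ⟨hs, hpos⟩ => ?_)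
  exact le_of_mul_le_mul_right (by linarith) (Set.mem_Ioi.1 hpos)

noncomputable def lassoObjective {n p : ℕ} (X : Matrix (Fin n) (Fin p) ℝ) (y : Fin n → ℝ) (lam : ℝ)
    (β : Fin p → ℝ) : ℝ :=
  1 / (2 * (n : ℝ)) * ∑ k, (y k - (X *ᵥ β) k) ^ 2 + lam * ∑ i, |β i|

section Lasso

variable {n p : ℕ} {X : Matrix (Fin n) (Fin p) ℝ} {y : Fin n → ℝ} {lam : ℝ} {b : Fin p → ℝ}

theorem two_mul_dotProduct_transpose_mulVec_residual_le (hn : 0 < n)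
    (hb : ∀ β, lassoObjective X y lam b ≤ lassoObjective X y lam β) (d : Fin p → ℝ) (t : ℝ) :
    2 * t * (d ⬝ᵥ (Xᵀ *ᵥ (y - X *ᵥ b)))
      ≤ t ^ 2 * ((X *ᵥ d) ⬝ᵥ (X *ᵥ d))
        + 2 * n * lam * (∑ i, |b i + t * d i| - ∑ i, |b i|) := by
  have hn' : (0 : ℝ) < n := by exact_mod_cast hn
  have hsq : ∑ k, (y k - (X *ᵥ (b + t • d)) k) ^ 2
      = ∑ k, (y k - (X *ᵥ b) k) ^ 2 - 2 * t * ((X *ᵥ d) ⬝ᵥ (y - X *ᵥ b))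
        + t ^ 2 * ((X *ᵥ d) ⬝ᵥ (X *ᵥ d)) := by
    simp only [dotProduct, Finset.mul_sum, ← Finset.sum_sub_distrib, ← Finset.sum_add_distrib]
    refine Finset.sum_congr rfl fun k _ => ?_
    simp only [mulVec_add, mulVec_smul, Pi.add_apply, Pi.sub_apply, Pi.smul_apply, smul_eq_mul]
    ring
  have hmin := hb (b + t • d)
  simp only [lassoObjective, hsq, Pi.add_apply, Pi.smul_apply, smul_eq_mul] at hmin
  rw [dotProduct_mulVec, vecMul_transpose]
  field_simp at hmin
  linarith

theorem dotProduct_transpose_mulVec_residual_le (hn : 0 < n) (hlam : 0 ≤ lam)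
    (hb : ∀ β, lassoObjective X y lam b ≤ lassoObjective X y lam β) (d : Fin p → ℝ) :
    d ⬝ᵥ (Xᵀ *ᵥ (y - X *ᵥ b)) ≤ n * lam * ∑ i, |d i| := by
  have key : ∀ s > (0 : ℝ), 2 * (d ⬝ᵥ (Xᵀ *ᵥ (y - X *ᵥ b)) - n * lam * ∑ i, |d i|) * s
      ≤ ((X *ᵥ d) ⬝ᵥ (X *ᵥ d)) * s ^ 2 := by
    intro s hs
    have htri : ∑ i, |b i + s * d i| - ∑ i, |b i| ≤ s * ∑ i, |d i| := by
      rw [Finset.mul_sum, sub_le_iff_le_add', ← Finset.sum_add_distrib]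
      refine Finset.sum_le_sum fun i _ => (abs_add_le _ _).trans_eq ?_
      rw [abs_mul, abs_of_pos hs]
    have h2nlam : (0 : ℝ) ≤ 2 * n * lam := by positivity
    nlinarith [two_mul_dotProduct_transpose_mulVec_residual_le hn hb d s,
      mul_le_mul_of_nonneg_left htri h2nlam]
  linarith [nonpos_of_eventually_mul_le_mul_sq (eventually_nhdsWithin_of_forall key)]

theorem abs_transpose_mulVec_residual_le (hn : 0 < n) (hlam : 0 ≤ lam)
    (hb : ∀ β, lassoObjective X y lam b ≤ lassoObjective X y lam β) (j : Fin p) :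
    |(Xᵀ *ᵥ (y - X *ᵥ b)) j| ≤ n * lam := by
  have hpos := dotProduct_transpose_mulVec_residual_le hn hlam hb (Pi.single j 1)
  have hneg := dotProduct_transpose_mulVec_residual_le hn hlam hb (-Pi.single j 1)
  have hone : ∑ i, |(Pi.single j 1 : Fin p → ℝ) i| = 1 := by
    rw [Finset.sum_eq_single j (fun i _ hi => by simp [hi]) (by simp)]; simp
  simp only [single_one_dotProduct, neg_dotProduct, Pi.neg_apply, abs_neg, hone, mul_one]
    at hpos hneg
  exact abs_le.2 ⟨by linarith, hpos⟩

theorem mul_sum_abs_le_dotProduct_transpose_mulVec_residual (hn : 0 < n)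
    (hb : ∀ β, lassoObjective X y lam b ≤ lassoObjective X y lam β) :
    n * lam * ∑ i, |b i| ≤ b ⬝ᵥ (Xᵀ *ᵥ (y - X *ᵥ b)) := by
  have key : ∀ s ∈ Set.Ioo (0 : ℝ) 1,
      2 * (n * lam * ∑ i, |b i| - b ⬝ᵥ (Xᵀ *ᵥ (y - X *ᵥ b))) * s
        ≤ ((X *ᵥ b) ⬝ᵥ (X *ᵥ b)) * s ^ 2 := by
    rintro s ⟨hs0, hs1⟩
    have hshrink : ∑ i, |b i + s * -b i| = (1 - s) * ∑ i, |b i| := by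
      rw [Finset.mul_sum]
      refine Finset.sum_congr rfl fun i _ => ?_
      rw [show b i + s * -b i = (1 - s) * b i by ring, abs_mul, abs_of_pos (by linarith)]
    have h := two_mul_dotProduct_transpose_mulVec_residual_le hn hb (-b) s
    simp only [neg_dotProduct, mulVec_neg, dotProduct_neg, neg_neg, Pi.neg_apply, hshrink] at h
    nlinarith [h]
  linarith [nonpos_of_eventually_mul_le_mul_sq
    (Filter.mem_of_superset (Ioo_mem_nhdsGT zero_lt_one) key)]

theorem eq_zero_of_forall_abs_transpose_mulVec_residual_lt (hn : 0 < n)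
    (hb : ∀ β, lassoObjective X y lam b ≤ lassoObjective X y lam β)
    (hlt : ∀ j, |(Xᵀ *ᵥ (y - X *ᵥ b)) j| < n * lam) : b = 0 := by
  set g := Xᵀ *ᵥ (y - X *ᵥ b)
  have hdot : b ⬝ᵥ g ≤ ∑ i, |b i| * |g i| :=
    Finset.sum_le_sum fun i _ => (le_abs_self _).trans (abs_mul _ _).le
  have hsum : ∑ i, |b i| * (n * lam - |g i|) ≤ 0 := by
    simp only [mul_sub, Finset.sum_sub_distrib, ← Finset.sum_mul]
    linarith [mul_sum_abs_le_dotProduct_transpose_mulVec_residual hn hb]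
  have hnonneg : ∀ i ∈ Finset.univ, 0 ≤ |b i| * (n * lam - |g i|) := fun i _ =>
    mul_nonneg (abs_nonneg (b i)) (sub_nonneg.2 (hlt i).le)
  have hterm := (Finset.sum_eq_zero_iff_of_nonneg hnonneg).1
    (hsum.antisymm (Finset.sum_nonneg hnonneg))
  funext i
  rcases mul_eq_zero.1 (hterm i (Finset.mem_univ i)) with h | h
  · exact abs_eq_zero.1 h
  · linarith [hlt i]

noncomputable def equicorrelationSet {n p : ℕ} (X : Matrix (Fin n) (Fin p) ℝ) (y : Fin n → ℝ)
    (lam : ℝ) (b : Fin p → ℝ) : Set (Fin p) :=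
  {j | |(Xᵀ *ᵥ (y - X *ᵥ b)) j| / n = lam}

theorem eq_zero_of_equicorrelationSet_eq_empty (hn : 0 < n) (hlam : 0 ≤ lam)
    (hb : ∀ β, lassoObjective X y lam b ≤ lassoObjective X y lam β)
    (hE : equicorrelationSet X y lam b = ∅) : b = 0 := by
  have hn' : (0 : ℝ) < n := by exact_mod_cast hn
  refine eq_zero_of_forall_abs_transpose_mulVec_residual_lt hn hb fun j =>
    (abs_transpose_mulVec_residual_le hn hlam hb j).lt_of_ne fun h => ?_
  have hj : j ∈ equicorrelationSet X y lam b := by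
    simp only [equicorrelationSet, Set.mem_ofPred_eq, h]
    field_simp
  simp [hE] at hj

theorem abs_transpose_mulVec_le_of_equicorrelationSet_eq_empty (hn : 0 < n) (hlam : 0 ≤ lam)
    (hb : ∀ β, lassoObjective X y lam b ≤ lassoObjective X y lam β)
    (hE : equicorrelationSet X y lam b = ∅) (j : Fin p) :
    |(Xᵀ *ᵥ y) j| ≤ n * lam := by
  have hbound := abs_transpose_mulVec_residual_le hn hlam hb j
  rwa [eq_zero_of_equicorrelationSet_eq_empty hn hlam hb hE, mulVec_zero, sub_zero] at hbound

end Lasso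

/-- Bound on the probability that the Lasso equicorrelation set is empty:
in the model `y = Xβ₀ + ε` with `ε ∼ N(0, σ² Iₙ)` and normalized columns, if for
each noise realization `β̂ e` minimizes the Lasso objective, then
`P(E = ∅) ≤ Φ((λ_L − ‖Σₙ β₀‖_∞)/(σ/√n))`, where `Σₙ = XᵀX/n` and `E` is the
equicorrelation set. -/
theorem stmt16 (n p : ℕ) (hn : 0 < n) (hp : 0 < p)
    (X : Matrix (Fin n) (Fin p) ℝ) (hX : ∀ j, ∑ k, (X k j) ^ 2 = (n : ℝ))
    (β0 : Fin p → ℝ) (σ : ℝ) (hσ : 0 < σ) (lamL : ℝ) (hl : 0 < lamL)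
    (βh : (Fin n → ℝ) → (Fin p → ℝ))
    (hmin : ∀ e : Fin n → ℝ, ∀ β : Fin p → ℝ,
      (1 / (2 * (n : ℝ))) * (∑ k, ((X.mulVec β0 + e) k - X.mulVec (βh e) k) ^ 2)
          + lamL * ∑ i, |βh e i|
        ≤ (1 / (2 * (n : ℝ))) * (∑ k, ((X.mulVec β0 + e) k - X.mulVec β k) ^ 2)
          + lamL * ∑ i, |β i|) :
    (Measure.pi fun _ : Fin n => gaussianReal 0 ⟨σ ^ 2, sq_nonneg σ⟩)
        {e : Fin n → ℝ | ∀ j : Fin p,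
          |∑ k, X k j * ((X.mulVec β0 + e) k - X.mulVec (βh e) k)| / n ≠ lamL}
      ≤ ENNReal.ofReal
          ((gaussianReal 0 1 (Set.Iic
            ((lamL - ⨆ j : Fin p, |((1 / (n : ℝ)) • ((Xᵀ * X).mulVec β0)) j|)
              / (σ / Real.sqrt n)))).toReal) := by
  have hn' : (0 : ℝ) < n := by exact_mod_cast hn
  have : Nonempty (Fin p) := ⟨⟨0, hp⟩⟩
  obtain ⟨j, hj⟩ := exists_eq_ciSup_of_finite
    (f := fun j => |((1 / (n : ℝ)) • ((Xᵀ * X) *ᵥ β0)) j|)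
  set M := ((Xᵀ * X) *ᵥ β0) j
  obtain ⟨s, hs, hsM⟩ := exists_abs_eq_one_mul_eq_abs M
  have hevent : {e : Fin n → ℝ | ∀ j : Fin p,
        |∑ k, X k j * ((X.mulVec β0 + e) k - X.mulVec (βh e) k)| / n ≠ lamL}
      ⊆ {e | ∑ k, s * X k j * e k ≤ n * lamL - |M|} := by
    intro e he
    have hbound := abs_transpose_mulVec_le_of_equicorrelationSet_eq_empty hn hl.le (hmin e)
      (Set.eq_empty_iff_forall_notMem.2 fun j hj => he j hj) j
    rw [mulVec_add, mulVec_mulVec, Pi.add_apply] at hbound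
    have hsum : ∑ k, s * X k j * e k = s * (Xᵀ *ᵥ e) j := by
      simp only [mulVec, dotProduct, transpose_apply, Finset.mul_sum, mul_assoc]
    calc ∑ k, s * X k j * e k = s * (M + (Xᵀ *ᵥ e) j) - |M| := by rw [hsum, ← hsM]; ring
      _ ≤ |M + (Xᵀ *ᵥ e) j| - |M| := by
          gcongr; exact (le_abs_self _).trans_eq (by rw [abs_mul, hs, one_mul])
      _ ≤ n * lamL - |M| := by gcongr
  have hsq : ∑ k, (s * X k j) ^ 2 = n := by
    simp only [mul_pow, ← sq_abs s, hs, one_pow, one_mul, hX]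
  have hv : (⟨σ ^ 2, sq_nonneg σ⟩ : ℝ≥0) ≠ 0 := fun h =>
    (pow_pos hσ 2).ne' (congrArg Subtype.val h)
  calc _ ≤ _ := measure_mono hevent
    _ = gaussianReal 0 1 (Set.Iic ((n * lamL - |M|) / √(σ ^ 2 * ∑ k, (s * X k j) ^ 2))) :=
      measure_pi_gaussianReal_sum_mul_le hv (hsq ▸ hn') _
    _ = _ := by
      rw [ENNReal.ofReal_toReal (measure_ne_top _ _), ← hj, hsq, Real.sqrt_mul (sq_nonneg σ),
        Real.sqrt_sq hσ.le]
      congr 2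
      simp only [Pi.smul_apply, smul_eq_mul, abs_mul, abs_of_pos (one_div_pos.2 hn')]
      rw [div_eq_div_iff (by positivity) (by positivity)]
      field_simp
      rw [Real.sq_sqrt hn'.le]
end
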